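/- arXiv:1107.1912 — 4 statements merged into one kernel-verified Lean document; each statement's English description precedes it below -/
import Mathlib

section
/- For any sequence of vectors F = {f_n}_{n=1}^N in R^M, the sequence of spectra {λ_{n;m}}_{m=1}^M of the partial frame operators F_n F_n* = Σ_{m=1}^n f_m f_m* forms a valid sequence of outer eigensteps for the spectrum of FF* and the norms μ_n = ‖f_n‖²: namely λ_{0;m}=0, λ_{N;m} is the spectrum of FF*, consecutive spectra interlace, and Σ_{m=1}^M λ_{n;m} = Σ_{m=1}^n μ_m. -/
/-- Same-length interlacing `{α} ⊑ {β}`: `α_M ≤ β_M` and `β_{m+1} ≤ α_m ≤ β_m` for `m < M`.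
For antitone sequences this is equivalent to: `α_i ≤ β_i` for all `i`, and
`β_{i+1} ≤ α_i` for consecutive indices. -/
def InterlacesOn (M : ℕ) (α β : Fin M → ℝ) : Prop :=
  (∀ i : Fin M, α i ≤ β i) ∧ (∀ i j : Fin M, (i : ℕ) + 1 = (j : ℕ) → β j ≤ α i)

/-!
Since `F_{n+1} F_{n+1}* = F_n F_n* + f_n f_n*`, consecutive partial frame operators `T ≤ S` differ
by a positive rank-one operator, and interlacing is a Courant–Fischer dimension count: for `i, j`
and a subspace `W` on which `⟪x, T x⟫ ≤ ⟪x, S x⟫`, if `dim W + (j + 1) + (dim E - i) > 2 dim E`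
then some `x ≠ 0` lies in `W`, in the span of the top `j + 1` eigenvectors of `T` and in the
span of the eigenvectors of `S` from the `i`-th on, whence `λ_j(T) ‖x‖² ≤ ⟪x, T x⟫ ≤ ⟪x, S x⟫ ≤
λ_i(S) ‖x‖²`. Taking `W = E`, `j = i` gives `λ_i(T) ≤ λ_i(S)`; exchanging the roles of `T` and
`S` and taking `W = f_nᗮ`, where the two quadratic forms agree, gives `λ_{i+1}(S) ≤ λ_i(T)`.
The sums of the spectra are traces, and `tr (f f*) = ‖f‖²`.
-/

open Module Submodule Finset Matrix
open scoped RealInnerProductSpace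

theorem Submodule.exists_mem_inf_ne_zero_of_finrank_lt {K V : Type*} [DivisionRing K]
    [AddCommGroup V] [Module K V] [FiniteDimensional K V] {U W : Submodule K V}
    (h : finrank K V < finrank K U + finrank K W) : ∃ x ∈ U ⊓ W, x ≠ 0 := by
  by_contra! hUW
  have hdisj : Disjoint U W :=
    disjoint_iff.2 <| eq_bot_iff.2 fun x hx => (mem_bot K).2 (hUW x hx)
  exact (finrank_add_finrank_le_of_disjoint hdisj).not_gt h

theorem Submodule.finrank_add_finrank_le_finrank_add_finrank_inf {K V : Type*} [DivisionRing K]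
    [AddCommGroup V] [Module K V] [FiniteDimensional K V] (U W : Submodule K V) :
    finrank K U + finrank K W ≤ finrank K V + finrank K ↥(U ⊓ W) := by
  rw [← finrank_sup_add_finrank_inf_eq]
  exact Nat.add_le_add_right (finrank_le _) _

section InnerProductSpace

variable {𝕜 E : Type*} [RCLike 𝕜] [NormedAddCommGroup E] [InnerProductSpace 𝕜 E]

theorem Submodule.finrank_le_finrank_orthogonal_span_singleton_add_one [FiniteDimensional 𝕜 E]
    (v : E) : finrank 𝕜 E ≤ finrank 𝕜 (𝕜 ∙ v)ᗮ + 1 := by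
  have hv : finrank 𝕜 (𝕜 ∙ v) ≤ 1 := by simpa using finrank_span_le_card ({v} : Set E)
  have := (𝕜 ∙ v).finrank_add_finrank_orthogonal
  omega

theorem OrthonormalBasis.finrank_span_image {ι : Type*} [Fintype ι] (b : OrthonormalBasis ι 𝕜 E)
    (s : Finset ι) : finrank 𝕜 (span 𝕜 (b '' s)) = s.card := by
  rw [Set.image_eq_range]
  exact (finrank_span_eq_card (b.orthonormal.linearIndependent.comp _ Subtype.val_injective)).trans
    (by simp)

theorem OrthonormalBasis.inner_eq_zero_of_mem_span_image {ι : Type*} [Fintype ι]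
    (b : OrthonormalBasis ι 𝕜 E) {s : Set ι} {i : ι} (hi : i ∉ s) {x : E}
    (hx : x ∈ span 𝕜 (b '' s)) : inner 𝕜 (b i) x = 0 := by
  suffices span 𝕜 (b '' s) ≤ (𝕜 ∙ b i)ᗮ from mem_orthogonal_singleton_iff_inner_right.1 (this hx)
  rw [span_le]
  rintro _ ⟨j, hj, rfl⟩
  exact mem_orthogonal_singleton_iff_inner_right.2 (b.orthonormal.2 fun hij => hi (hij ▸ hj))

end InnerProductSpace

namespace LinearMap.IsSymmetric

variable {E : Type*} [NormedAddCommGroup E] [InnerProductSpace ℝ E] [FiniteDimensional ℝ E]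
  {T : E →ₗ[ℝ] E} (hT : T.IsSymmetric) {n : ℕ} (hn : finrank ℝ E = n)

theorem inner_apply_self_sub_mul_norm_sq (c : ℝ) (x : E) :
    ⟪x, T x⟫ - c * ‖x‖ ^ 2 =
      ∑ i, (hT.eigenvalues hn i - c) * ⟪hT.eigenvectorBasis hn i, x⟫ ^ 2 := by
  set b := hT.eigenvectorBasis hn
  have hTb : ∀ i, ⟪b i, T x⟫ = hT.eigenvalues hn i * ⟪b i, x⟫ := fun i => by
    rw [← hT, hT.apply_eigenvectorBasis, real_inner_smul_left]
    rfl
  rw [← real_inner_self_eq_norm_sq, ← b.sum_inner_mul_inner, ← b.sum_inner_mul_inner, mul_sum,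
    ← sum_sub_distrib]
  refine sum_congr rfl fun i _ => ?_
  rw [hTb, real_inner_comm x]
  ring

theorem mul_norm_sq_le_inner_apply_self_of_mem_span {s : Set (Fin n)} {c : ℝ}
    (hs : ∀ i ∈ s, c ≤ hT.eigenvalues hn i) {x : E}
    (hx : x ∈ span ℝ (hT.eigenvectorBasis hn '' s)) : c * ‖x‖ ^ 2 ≤ ⟪x, T x⟫ := by
  rw [← sub_nonneg, hT.inner_apply_self_sub_mul_norm_sq hn]
  refine sum_nonneg fun i _ => ?_
  by_cases hi : i ∈ s
  · exact mul_nonneg (sub_nonneg.2 (hs i hi)) (sq_nonneg _)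
  · simp [(hT.eigenvectorBasis hn).inner_eq_zero_of_mem_span_image hi hx]

theorem inner_apply_self_le_mul_norm_sq_of_mem_span {s : Set (Fin n)} {c : ℝ}
    (hs : ∀ i ∈ s, hT.eigenvalues hn i ≤ c) {x : E}
    (hx : x ∈ span ℝ (hT.eigenvectorBasis hn '' s)) : ⟪x, T x⟫ ≤ c * ‖x‖ ^ 2 := by
  rw [← sub_nonpos, hT.inner_apply_self_sub_mul_norm_sq hn]
  refine sum_nonpos fun i _ => ?_
  by_cases hi : i ∈ s
  · exact mul_nonpos_of_nonpos_of_nonneg (sub_nonpos.2 (hs i hi)) (sq_nonneg _)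
  · simp [(hT.eigenvectorBasis hn).inner_eq_zero_of_mem_span_image hi hx]

theorem eigenvalues_le_of_inner_apply_self_le {S : E →ₗ[ℝ] E} (hS : S.IsSymmetric)
    (W : Submodule ℝ E) (hW : ∀ x ∈ W, ⟪x, T x⟫ ≤ ⟪x, S x⟫) {i j : Fin n}
    (hij : n + i < finrank ℝ W + j + 1) : hT.eigenvalues hn j ≤ hS.eigenvalues hn i := by
  set U := span ℝ (hT.eigenvectorBasis hn '' ↑(Finset.Iic j))
  set V := span ℝ (hS.eigenvectorBasis hn '' ↑(Finset.Ici i))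
  have hU : finrank ℝ U = j + 1 := by
    simpa using (hT.eigenvectorBasis hn).finrank_span_image (Finset.Iic j)
  have hV : finrank ℝ V = n - i := by
    simpa using (hS.eigenvectorBasis hn).finrank_span_image (Finset.Ici i)
  have hUW := finrank_add_finrank_le_finrank_add_finrank_inf U W
  obtain ⟨x, ⟨⟨hxU, hxW⟩, hxV⟩, hx⟩ :=
    exists_mem_inf_ne_zero_of_finrank_lt (U := U ⊓ W) (W := V) (by omega)
  have hT_ge : hT.eigenvalues hn j * ‖x‖ ^ 2 ≤ ⟪x, T x⟫ :=
    hT.mul_norm_sq_le_inner_apply_self_of_mem_span hn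
      (fun k hk => hT.eigenvalues_antitone hn (mem_Iic.1 hk)) hxU
  have hS_le : ⟪x, S x⟫ ≤ hS.eigenvalues hn i * ‖x‖ ^ 2 :=
    hS.inner_apply_self_le_mul_norm_sq_of_mem_span hn
      (fun k hk => hS.eigenvalues_antitone hn (mem_Ici.1 hk)) hxV
  exact le_of_mul_le_mul_right ((hT_ge.trans (hW x hxW)).trans hS_le) (by positivity)

theorem interlacesOn_eigenvalues_of_inner_apply_self_eq_add_sq {S : E →ₗ[ℝ] E}
    (hS : S.IsSymmetric) (v : E) (hTS : ∀ x, ⟪x, S x⟫ = ⟪x, T x⟫ + ⟪v, x⟫ ^ 2) :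
    InterlacesOn n (hT.eigenvalues hn) (hS.eigenvalues hn) := by
  refine ⟨fun i => ?_, fun i j hij => ?_⟩
  · refine hT.eigenvalues_le_of_inner_apply_self_le hn hS ⊤ (fun x _ => ?_) (by simp; omega)
    rw [hTS]
    exact le_add_of_nonneg_right (sq_nonneg _)
  · refine hS.eigenvalues_le_of_inner_apply_self_le hn hT (ℝ ∙ v)ᗮ (fun x hx => ?_) ?_
    · rw [hTS, mem_orthogonal_singleton_iff_inner_right.1 hx]
      simp
    · have := finrank_le_finrank_orthogonal_span_singleton_add_one (𝕜 := ℝ) v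
      omega

theorem eigenvalues_eq_of_roots_charpoly {L : Fin n → ℝ} (hL : Antitone L)
    (hroots : T.charpoly.roots = univ.val.map L) : hT.eigenvalues hn = L := by
  rw [hT.roots_charpoly_eq_eigenvalues hn, RCLike.ofReal_real_eq_id, Function.id_comp,
    Fin.univ_val_map, Fin.univ_val_map, Multiset.coe_eq_coe] at hroots
  exact List.ofFn_injective <|
    hroots.eq_of_sortedGE (hT.eigenvalues_antitone hn).sortedGE_ofFn hL.sortedGE_ofFn

end LinearMap.IsSymmetric

namespace Matrix

variable {m : Type*}

theorem charpoly_toEuclideanLin {𝕜 : Type*} [RCLike 𝕜] [Fintype m] [DecidableEq m]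
    (A : Matrix m m 𝕜) : (toEuclideanLin A).charpoly = A.charpoly := by
  rw [toEuclideanLin_eq_toLin_orthonormal, charpoly_toLin]

theorem inner_toEuclideanLin_vecMulVec_self [Fintype m] [DecidableEq m] (v : m → ℝ)
    (x : EuclideanSpace ℝ m) :
    ⟪x, toEuclideanLin (vecMulVec v v) x⟫ = ⟪WithLp.toLp 2 v, x⟫ ^ 2 := by
  rw [toLpLin_apply, vecMulVec_mulVec, op_smul_eq_smul, WithLp.toLp_smul, real_inner_smul_right,
    real_inner_comm]
  simp [EuclideanSpace.inner_eq_star_dotProduct, dotProduct_comm, sq]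

theorem isHermitian_vecMulVec_self (v : m → ℝ) : (vecMulVec v v).IsHermitian := by
  rw [IsHermitian, conjTranspose_eq_transpose_of_trivial, transpose_vecMulVec]

variable (f : ℕ → m → ℝ)

/-- `F_n F_n*`, where `F_n` has columns `f 0, …, f (n - 1)`. -/
def partialFrameOperator (n : ℕ) : Matrix m m ℝ :=
  ∑ k ∈ range n, vecMulVec (f k) (f k)

theorem partialFrameOperator_succ (n : ℕ) :
    partialFrameOperator f (n + 1) = partialFrameOperator f n + vecMulVec (f n) (f n) :=
  sum_range_succ _ _

theorem isHermitian_partialFrameOperator (n : ℕ) : (partialFrameOperator f n).IsHermitian :=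
  (isSelfAdjoint_sum _ fun k _ => (isHermitian_vecMulVec_self (f k)).isSelfAdjoint).isHermitian

theorem trace_partialFrameOperator [Fintype m] (n : ℕ) :
    (partialFrameOperator f n).trace = ∑ k ∈ range n, ∑ i, f k i ^ 2 := by
  simp only [partialFrameOperator, trace_sum, trace_vecMulVec, dotProduct, sq]

end Matrix

/-- The spectra of the partial frame operators `FₙFₙ* = Σ_{k<n} f_k f_k*` of any sequence of
vectors form a valid sequence of outer eigensteps: they start at zero, consecutive spectra
interlace, and the `n`-th spectrum sums to `Σ_{k<n} ‖f_k‖²` (so the final one is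
the spectrum of `FF*`). -/
theorem partial_frame_operators_are_eigensteps (M N : ℕ) (f : ℕ → (Fin M → ℝ))
    (L : ℕ → Fin M → ℝ) (hL : ∀ n, Antitone (L n))
    (heig : ∀ n, n ≤ N →
      (∑ k ∈ Finset.range n, Matrix.vecMulVec (f k) (f k)).charpoly.roots =
        Multiset.map (L n) Finset.univ.val) :
    (∀ m : Fin M, L 0 m = 0) ∧
    (∀ n, 1 ≤ n → n ≤ N → InterlacesOn M (L (n - 1)) (L n)) ∧
    (∀ n, n ≤ N → ∑ m : Fin M, L n m = ∑ k ∈ Finset.range n, ∑ i : Fin M, (f k i) ^ 2) := by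
  have hsymm n := isSymmetric_toEuclideanLin_iff.2 (isHermitian_partialFrameOperator f n)
  have hLeig : ∀ n ≤ N, L n = (hsymm n).eigenvalues finrank_euclideanSpace_fin := fun n hn =>
    ((hsymm n).eigenvalues_eq_of_roots_charpoly _ (hL n)
      (by rw [charpoly_toEuclideanLin]; exact heig n hn)).symm
  refine ⟨fun m => ?_, fun n hn1 hnN => ?_, fun n hnN => ?_⟩
  · have h0 := heig 0 N.zero_le
    rw [range_zero, sum_empty, charpoly_zero, Polynomial.roots_X_pow] at h0
    have hm : L 0 m ∈ Fintype.card (Fin M) • ({0} : Multiset ℝ) :=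
      h0 ▸ Multiset.mem_map_of_mem _ (mem_univ_val m)
    exact Multiset.mem_singleton.1 (Multiset.mem_of_mem_nsmul hm)
  · obtain ⟨k, rfl⟩ := Nat.exists_eq_add_of_le' hn1
    rw [Nat.add_sub_cancel, hLeig k (by omega), hLeig (k + 1) hnN]
    refine (hsymm k).interlacesOn_eigenvalues_of_inner_apply_self_eq_add_sq _ (hsymm (k + 1))
      (WithLp.toLp 2 (f k)) fun x => ?_
    rw [partialFrameOperator_succ, map_add, LinearMap.add_apply, inner_add_right,
      inner_toEuclideanLin_vecMulVec_self]
  · rw [← trace_partialFrameOperator, trace_eq_sum_roots_charpoly_of_splits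
      (isHermitian_partialFrameOperator f n).splits_charpoly]
    exact (congrArg Multiset.sum (heig n hnN)).symm
end

section
/- Let {λ_n}_{n=1}^N and {μ_n}_{n=1}^N be nonnegative nonincreasing sequences with λ_n = 0 for all n > M (M ≤ N). Given a sequence of outer eigensteps {{λ_{n;m}}_{m=1}^M}_{n=0}^N, the sequences {λ_{n;m}}_{m=1}^n, n=1,...,N, obtained by setting λ_{n;m} := 0 whenever m > M, form a valid sequence of inner eigensteps: λ_{N;m} = λ_m for all m ≤ N, each {λ_{n−1;m}}_{m=1}^{n−1} interlaces on {λ_{n;m}}_{m=1}^n, and Σ_{m=1}^n λ_{n;m} = Σ_{m=1}^n μ_m. -/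
/-- Zero-padding a sequence of outer eigensteps (indexed `λ_{n;m}`, `n = 0,…,N`,
`m = 1,…,M`) by `λ_{n;m} := 0` for `m > M` yields a valid sequence of inner eigensteps. -/
theorem outer_to_inner_eigensteps (M N : ℕ) (hMN : M ≤ N) (hM : 1 ≤ M)
    (lam mu : ℕ → ℝ)
    (hlam_nonneg : ∀ n, 1 ≤ n → n ≤ N → 0 ≤ lam n)
    (hlam_mono : ∀ n, 1 ≤ n → n < N → lam (n + 1) ≤ lam n)
    (hmu_nonneg : ∀ n, 1 ≤ n → n ≤ N → 0 ≤ mu n)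
    (hmu_mono : ∀ n, 1 ≤ n → n < N → mu (n + 1) ≤ mu n)
    (hlam_zero : ∀ n, M < n → n ≤ N → lam n = 0)
    (L : ℕ → ℕ → ℝ)
    -- outer eigensteps axioms:
    (hout_zero : ∀ m, 1 ≤ m → m ≤ M → L 0 m = 0)
    (hout_final : ∀ m, 1 ≤ m → m ≤ M → L N m = lam m)
    (hout_interlace : ∀ n, 1 ≤ n → n ≤ N →
      (∀ m, 1 ≤ m → m < M → L n (m + 1) ≤ L (n - 1) m ∧ L (n - 1) m ≤ L n m) ∧
      L (n - 1) M ≤ L n M)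
    (hout_trace : ∀ n, 1 ≤ n → n ≤ N →
      ∑ m ∈ Finset.Icc 1 M, L n m = ∑ k ∈ Finset.Icc 1 n, mu k)
    -- the zero-padded sequence:
    (L' : ℕ → ℕ → ℝ)
    (hL' : ∀ n m, L' n m = if m ≤ M then L n m else 0) :
    -- inner eigensteps conclusions:
    (∀ m, 1 ≤ m → m ≤ N → L' N m = lam m) ∧
    (∀ n, 2 ≤ n → n ≤ N → ∀ m, 1 ≤ m → m ≤ n - 1 →
      L' n (m + 1) ≤ L' (n - 1) m ∧ L' (n - 1) m ≤ L' n m) ∧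
    (∀ n, 1 ≤ n → n ≤ N →
      ∑ m ∈ Finset.Icc 1 n, L' n m = ∑ k ∈ Finset.Icc 1 n, mu k) := by
  -- Lemma A: nonnegativity of L
  have hA : ∀ n, n ≤ N → ∀ m, 1 ≤ m → m ≤ M → 0 ≤ L n m := by
    intro n
    induction n with
    | zero => intro _ m h1 h2; rw [hout_zero m h1 h2]
    | succ k ih =>
      intro hk m h1 h2
      have hk' : k ≤ N := by omega
      have hint := hout_interlace (k+1) (by omega) hk
      have hstep : L k m ≤ L (k+1) m := by
        rcases eq_or_lt_of_le h2 with h | h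
        · have := hint.2
          simpa [h, Nat.add_sub_cancel] using this
        · have := (hint.1 m h1 h).2
          simpa [Nat.add_sub_cancel] using this
      exact le_trans (ih hk' m h1 h2) hstep
  -- Lemma B: L n m = 0 for n < m ≤ M
  have hB : ∀ n, n ≤ N → ∀ m, n < m → m ≤ M → L n m = 0 := by
    intro n
    induction n with
    | zero => intro _ m h1 h2; exact hout_zero m h1 h2
    | succ k ih =>
      intro hk m h1 h2
      have hk' : k ≤ N := by omega
      have hm2 : 2 ≤ m := by omega
      have hint := hout_interlace (k+1) (by omega) hk
      have h3 := (hint.1 (m-1) (by omega) (by omega)).1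
      rw [Nat.add_sub_cancel] at h3
      have hmm : m - 1 + 1 = m := by omega
      rw [hmm] at h3
      have h4 : L k (m-1) = 0 := ih hk' (m-1) (by omega) (by omega)
      rw [h4] at h3
      exact le_antisymm h3 (hA (k+1) hk m (by omega) h2)
  refine ⟨?_, ?_, ?_⟩
  · -- final values
    intro m h1 h2
    rw [hL']
    by_cases hm : m ≤ M
    · rw [if_pos hm]; exact hout_final m h1 hm
    · rw [if_neg hm, hlam_zero m (by omega) h2]
  · -- interlacing
    intro n hn2 hnN m h1 hm
    have hn1 : 1 ≤ n := by omega
    have hn1N : n - 1 ≤ N := by omega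
    have hint := hout_interlace n hn1 hnN
    by_cases hc1 : m < M
    · have h := hint.1 m h1 hc1
      rw [hL', hL', hL', if_pos (by omega : m + 1 ≤ M), if_pos (by omega : m ≤ M),
        if_pos (by omega : m ≤ M)]
      exact h
    · by_cases hc2 : m = M
      · rw [hL', hL', hL', if_neg (by omega), if_pos (by omega), if_pos (by omega), hc2]
        exact ⟨hA (n-1) hn1N M hM le_rfl, hint.2⟩
      · have hMm : M < m := by omega
        rw [hL', hL', hL', if_neg (by omega), if_neg (by omega), if_neg (by omega)]
        exact ⟨le_rfl, le_rfl⟩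
  · -- trace
    intro n hn1 hnN
    have key : ∑ m ∈ Finset.Icc 1 n, L' n m = ∑ m ∈ Finset.Icc 1 M, L n m := by
      have h1 : ∑ m ∈ Finset.Icc 1 n, L' n m
          = ∑ m ∈ Finset.Icc 1 (max n M), L' n m := by
        refine Finset.sum_subset (Finset.Icc_subset_Icc_right (le_max_left n M)) ?_
        intro m hmem hnot
        simp only [Finset.mem_Icc] at hmem hnot
        have hnm : n < m := by omega
        rw [hL']
        by_cases hm : m ≤ M
        · rw [if_pos hm]; exact hB n hnN m hnm hm
        · rw [if_neg hm]
      have h2 : ∑ m ∈ Finset.Icc 1 (max n M), L' n m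
          = ∑ m ∈ Finset.Icc 1 M, L' n m := by
        refine (Finset.sum_subset (Finset.Icc_subset_Icc_right (le_max_right n M)) ?_).symm
        intro m hmem hnot
        simp only [Finset.mem_Icc] at hmem hnot
        rw [hL', if_neg (by omega)]
      rw [h1, h2]
      refine Finset.sum_congr rfl ?_
      intro m hmem
      simp only [Finset.mem_Icc] at hmem
      rw [hL', if_pos hmem.2]
    rw [key, hout_trace n hn1 hnN]
end

section
/- Let {λ_n}_{n=1}^N and {μ_n}_{n=1}^N be nonnegative nonincreasing sequences with λ_n = 0 for all n > M (M ≤ N). Given a sequence of inner eigensteps {{λ_{n;m}}_{m=1}^n}_{n=1}^N, the sequences {λ_{n;m}}_{m=1}^M, n=0,...,N, obtained by setting λ_{n;m} := 0 whenever m > n, form a valid sequence of outer eigensteps. -/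
/-- Zero-padding a sequence of inner eigensteps (indexed `λ_{n;m}`, `n = 1,…,N`,
`m = 1,…,n`) by `λ_{n;m} := 0` for `m > n` yields a valid sequence of outer eigensteps. -/
theorem inner_to_outer_eigensteps (M N : ℕ) (hMN : M ≤ N) (hM : 1 ≤ M)
    (lam mu : ℕ → ℝ)
    (hlam_nonneg : ∀ n, 1 ≤ n → n ≤ N → 0 ≤ lam n)
    (hlam_mono : ∀ n, 1 ≤ n → n < N → lam (n + 1) ≤ lam n)
    (hmu_nonneg : ∀ n, 1 ≤ n → n ≤ N → 0 ≤ mu n)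
    (hmu_mono : ∀ n, 1 ≤ n → n < N → mu (n + 1) ≤ mu n)
    (hlam_zero : ∀ n, M < n → n ≤ N → lam n = 0)
    (L : ℕ → ℕ → ℝ)
    -- inner eigensteps axioms:
    (hin_final : ∀ m, 1 ≤ m → m ≤ N → L N m = lam m)
    (hin_interlace : ∀ n, 2 ≤ n → n ≤ N → ∀ m, 1 ≤ m → m ≤ n - 1 →
      L n (m + 1) ≤ L (n - 1) m ∧ L (n - 1) m ≤ L n m)
    (hin_trace : ∀ n, 1 ≤ n → n ≤ N →
      ∑ m ∈ Finset.Icc 1 n, L n m = ∑ k ∈ Finset.Icc 1 n, mu k)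
    -- the zero-padded sequence:
    (L' : ℕ → ℕ → ℝ)
    (hL' : ∀ n m, L' n m = if m ≤ n then L n m else 0) :
    -- outer eigensteps conclusions:
    (∀ m, 1 ≤ m → m ≤ M → L' 0 m = 0) ∧
    (∀ m, 1 ≤ m → m ≤ M → L' N m = lam m) ∧
    (∀ n, 1 ≤ n → n ≤ N →
      (∀ m, 1 ≤ m → m < M → L' n (m + 1) ≤ L' (n - 1) m ∧ L' (n - 1) m ≤ L' n m) ∧
      L' (n - 1) M ≤ L' n M) ∧
    (∀ n, 1 ≤ n → n ≤ N →
      ∑ m ∈ Finset.Icc 1 M, L' n m = ∑ k ∈ Finset.Icc 1 n, mu k) := by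
  -- upper bound: L n m ≤ lam m
  have upper : ∀ k n m, 1 ≤ m → m ≤ n → n + k = N → L n m ≤ lam m := by
    intro k
    induction k with
    | zero =>
      intro n m h1 h2 h3
      simp only [Nat.add_zero] at h3; subst h3
      rw [hin_final m h1 h2]
    | succ k ih =>
      intro n m h1 h2 h3
      have step := (hin_interlace (n + 1) (by omega) (by omega) m h1 (by omega)).2
      simp only [Nat.add_sub_cancel] at step
      exact le_trans step (ih (n + 1) m h1 (by omega) (by omega))
  -- lower bound: lam (m + k) ≤ L n m  where n + k = N
  have lower : ∀ k n m, 1 ≤ m → m ≤ n → n + k = N → lam (m + k) ≤ L n m := by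
    intro k
    induction k with
    | zero =>
      intro n m h1 h2 h3
      simp only [Nat.add_zero] at h3 ⊢; subst h3
      rw [hin_final m h1 h2]
    | succ k ih =>
      intro n m h1 h2 h3
      have step := (hin_interlace (n + 1) (by omega) (by omega) m h1 (by omega)).1
      simp only [Nat.add_sub_cancel] at step
      have h' := ih (n + 1) (m + 1) (by omega) (by omega) (by omega)
      have : m + (k + 1) = (m + 1) + k := by omega
      rw [this]
      exact le_trans h' step
  have nonneg : ∀ n m, 1 ≤ m → m ≤ n → n ≤ N → 0 ≤ L n m := by
    intro n m h1 h2 h3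
    have hl := lower (N - n) n m h1 h2 (by omega)
    have h0 := hlam_nonneg (m + (N - n)) (by omega) (by omega)
    linarith
  have hzero : ∀ n m, M < m → m ≤ n → n ≤ N → L n m = 0 := by
    intro n m hMm h2 h3
    have hu := upper (N - n) n m (by omega) h2 (by omega)
    have hl := nonneg n m (by omega) h2 h3
    have h0 := hlam_zero m hMm (by omega)
    linarith
  refine ⟨?_, ?_, ?_, ?_⟩
  · intro m h1 _
    rw [hL', if_neg (by omega)]
  · intro m h1 h2
    rw [hL', if_pos (le_trans h2 hMN)]
    exact hin_final m h1 (le_trans h2 hMN)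
  · intro n hn1 hnN
    constructor
    · intro m h1 hmM
      by_cases hc : m + 1 ≤ n
      · have h2n : 2 ≤ n := by omega
        have hint := hin_interlace n h2n hnN m h1 (by omega)
        rw [hL', hL', hL', if_pos hc, if_pos (by omega), if_pos (by omega)]
        exact ⟨hint.1, hint.2⟩
      · -- m ≥ n, everything on the padded side
        rw [hL', hL', hL', if_neg hc, if_neg (by omega)]
        refine ⟨le_refl 0, ?_⟩
        by_cases hc2 : m ≤ n
        · rw [if_pos hc2]; exact nonneg n m h1 hc2 hnN
        · rw [if_neg hc2]
    · by_cases hc : M ≤ n - 1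
      · have h2n : 2 ≤ n := by omega
        have hint := (hin_interlace n h2n hnN M hM hc).2
        rw [hL', hL', if_pos hc, if_pos (by omega)]
        exact hint
      · rw [hL', hL', if_neg hc]
        by_cases hc2 : M ≤ n
        · rw [if_pos hc2]; exact nonneg n M hM hc2 hnN
        · rw [if_neg hc2]
  · -- trace condition
    intro n hn1 hnN
    have key : ∑ m ∈ Finset.Icc 1 M, L' n m = ∑ m ∈ Finset.Icc 1 n, L n m := by
      rcases le_total n M with h | h
      · rw [← Finset.sum_subset (Finset.Icc_subset_Icc_right h)
          (fun m hm hnm => by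
            simp only [Finset.mem_Icc] at hm hnm
            rw [hL', if_neg (by omega)])]
        exact Finset.sum_congr rfl (fun m hm => by
          simp only [Finset.mem_Icc] at hm
          rw [hL', if_pos hm.2])
      · have hcongr : ∑ m ∈ Finset.Icc 1 M, L' n m = ∑ m ∈ Finset.Icc 1 M, L n m :=
          Finset.sum_congr rfl (fun m hm => by
            simp only [Finset.mem_Icc] at hm
            rw [hL', if_pos (le_trans hm.2 h)])
        rw [hcongr]
        exact Finset.sum_subset (Finset.Icc_subset_Icc_right h)
          (fun m hm hnm => by
            simp only [Finset.mem_Icc] at hm hnm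
            exact hzero n m (by omega) hm.2 hnN)
    rw [key, hin_trace n hn1 hnN]
end

section
/- Among all M×M symmetric positive definite matrices S with fixed trace Tr(S) = T, the quantity Tr(S^{-1}) is minimized exactly when S = (T/M)·I, and the minimum value is M²/T. Consequently, among frames {f_n}_{n=1}^N in R^M with Σ‖f_n‖² = N, tight frames minimize the MSE Tr[(FF*)^{-1}], achieving M²/N. -/
/-!
Diagonalising `S` turns `Tr S` and `Tr S⁻¹` into `∑ λᵢ` and `∑ λᵢ⁻¹` over its (positive)
eigenvalues, and with `T = ∑ λᵢ`
`∑ λᵢ⁻¹ - M² / T = ∑ (T - M λᵢ)² / (λᵢ T²) ≥ 0`,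
with equality iff every `λᵢ = T / M`, i.e. iff `S = (T / M) • 1`. For a frame, `Tr (F Fᵀ)` is
`∑ ‖fₙ‖² = N`, and a scalar frame operator `A • 1` has trace `A M`, which forces `A = N / M`.
-/

open Matrix Finset Unitary

section SumInv

variable {ι : Type*} [Fintype ι] {lam : ι → ℝ}

theorem sum_inv_sub_sq_card_div_sum (hlam : ∀ i, 0 < lam i) (hT : ∑ i, lam i ≠ 0) :
    ∑ i, (lam i)⁻¹ - (Fintype.card ι : ℝ) ^ 2 / ∑ i, lam i =
      ∑ i, (∑ j, lam j - Fintype.card ι * lam i) ^ 2 / (lam i * (∑ j, lam j) ^ 2) := by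
  set T := ∑ j, lam j with hTdef
  set c : ℝ := (Fintype.card ι : ℝ)
  have hterm : ∀ i, (T - c * lam i) ^ 2 / (lam i * T ^ 2) =
      (lam i)⁻¹ - 2 * c / T + c ^ 2 / T ^ 2 * lam i := by
    intro i
    have := (hlam i).ne'
    field_simp
    ring
  simp only [hterm, sum_add_distrib, sum_sub_distrib, sum_const, card_univ, nsmul_eq_mul,
    ← mul_sum, ← hTdef]
  field_simp
  ring

theorem sq_card_div_sum_le_sum_inv (hlam : ∀ i, 0 < lam i) :
    (Fintype.card ι : ℝ) ^ 2 / ∑ i, lam i ≤ ∑ i, (lam i)⁻¹ := by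
  simpa using sq_sum_div_le_sum_sq_div univ (fun _ ↦ (1 : ℝ)) (fun i _ ↦ hlam i)

theorem sum_inv_eq_sq_card_div_sum_iff (hlam : ∀ i, 0 < lam i) :
    ∑ i, (lam i)⁻¹ = (Fintype.card ι : ℝ) ^ 2 / ∑ i, lam i ↔
      ∀ i, lam i = (∑ j, lam j) / Fintype.card ι := by
  rcases isEmpty_or_nonempty ι with hι | hι
  · simp
  have hT : 0 < ∑ j, lam j := sum_pos (fun i _ ↦ hlam i) univ_nonempty
  have hc : (0 : ℝ) < Fintype.card ι := by exact_mod_cast Fintype.card_pos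
  rw [← sub_eq_zero, sum_inv_sub_sq_card_div_sum hlam hT.ne',
    sum_eq_zero_iff_of_nonneg (fun i _ ↦ by have := hlam i; positivity)]
  refine forall_congr' fun i ↦ ?_
  have := hlam i
  rw [imp_iff_right (mem_univ i), div_eq_zero_iff, or_iff_left (by positivity), sq_eq_zero_iff,
    sub_eq_zero, eq_div_iff hc.ne', mul_comm, eq_comm]

end SumInv

section Spectral

variable {𝕜 n : Type*} [RCLike 𝕜] [Fintype n] [DecidableEq n]

theorem Matrix.trace_conjStarAlgAut (u : unitary (Matrix n n 𝕜)) (X : Matrix n n 𝕜) :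
    trace (conjStarAlgAut 𝕜 _ u X) = trace X := by
  rw [conjStarAlgAut_apply, trace_mul_cycle, coe_star_mul_self, one_mul]

namespace Matrix.IsHermitian

variable {A : Matrix n n 𝕜} (hA : A.IsHermitian)
include hA

theorem inv_eq_conjStarAlgAut (h : ∀ i, hA.eigenvalues i ≠ 0) :
    A⁻¹ = conjStarAlgAut 𝕜 _ hA.eigenvectorUnitary
      (diagonal (RCLike.ofReal ∘ fun i ↦ (hA.eigenvalues i)⁻¹)) := by
  set e := conjStarAlgAut 𝕜 _ hA.eigenvectorUnitary
  refine inv_eq_left_inv ?_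
  calc e (diagonal (RCLike.ofReal ∘ fun i ↦ (hA.eigenvalues i)⁻¹)) * A
      = e (diagonal (RCLike.ofReal ∘ fun i ↦ (hA.eigenvalues i)⁻¹) *
          diagonal (RCLike.ofReal ∘ hA.eigenvalues)) := by
        rw [map_mul, ← hA.spectral_theorem]
    _ = 1 := by
        rw [diagonal_mul_diagonal, ← map_one e]
        congr 1
        rw [← diagonal_one]
        congr 1
        funext i
        simp [h i]

theorem trace_inv (h : ∀ i, hA.eigenvalues i ≠ 0) :
    trace A⁻¹ = ∑ i, ((hA.eigenvalues i)⁻¹ : 𝕜) := by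
  rw [hA.inv_eq_conjStarAlgAut h, trace_conjStarAlgAut, trace_diagonal]
  simp

theorem eq_smul_one_iff (c : ℝ) : A = c • 1 ↔ ∀ i, hA.eigenvalues i = c := by
  rw [← EquivLike.apply_eq_iff_eq (conjStarAlgAut 𝕜 _ (star hA.eigenvectorUnitary)),
    conjStarAlgAut_star_eigenvectorUnitary, RCLike.real_smul_eq_coe_smul (K := 𝕜), map_smul,
    map_one, smul_one_eq_diagonal, diagonal_eq_diagonal_iff]
  simp

end Matrix.IsHermitian

end Spectral

namespace Matrix.PosDef

variable {n : Type*} [Fintype n] [DecidableEq n] {S : Matrix n n ℝ} (hS : S.PosDef)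
include hS

theorem trace_eq_sum_eigenvalues : trace S = ∑ i, hS.1.eigenvalues i := by
  simpa using hS.1.trace_eq_sum_eigenvalues

theorem trace_inv_eq_sum_inv_eigenvalues : trace S⁻¹ = ∑ i, (hS.1.eigenvalues i)⁻¹ := by
  simpa using hS.1.trace_inv fun i ↦ (hS.eigenvalues_pos i).ne'

theorem sq_card_div_trace_le_trace_inv : (Fintype.card n : ℝ) ^ 2 / trace S ≤ trace S⁻¹ := by
  rw [hS.trace_eq_sum_eigenvalues, hS.trace_inv_eq_sum_inv_eigenvalues]
  exact sq_card_div_sum_le_sum_inv hS.eigenvalues_pos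

theorem trace_inv_eq_sq_card_div_trace_iff :
    trace S⁻¹ = (Fintype.card n : ℝ) ^ 2 / trace S ↔ S = (trace S / Fintype.card n) • 1 := by
  rw [hS.1.eq_smul_one_iff, hS.trace_eq_sum_eigenvalues, hS.trace_inv_eq_sum_inv_eigenvalues]
  exact sum_inv_eq_sq_card_div_sum_iff hS.eigenvalues_pos

end Matrix.PosDef

theorem Matrix.exists_eq_smul_one_iff {R n : Type*} [Field R] [CharZero R] [Fintype n]
    [DecidableEq n] (S : Matrix n n R) :
    (∃ a : R, S = a • 1) ↔ S = (trace S / Fintype.card n) • 1 := by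
  refine ⟨?_, fun h ↦ ⟨_, h⟩⟩
  rintro ⟨a, rfl⟩
  rcases isEmpty_or_nonempty n with hn | hn
  · exact Subsingleton.elim _ _
  have : (Fintype.card n : R) ≠ 0 := Nat.cast_ne_zero.mpr Fintype.card_ne_zero
  rw [trace_smul, trace_one, smul_eq_mul, mul_div_cancel_right₀ _ this]

theorem Matrix.trace_mul_transpose_self {R m n : Type*} [Semiring R] [Fintype m] [Fintype n]
    (F : Matrix m n R) :
    trace (F * Fᵀ) = ∑ j, ∑ i, F i j ^ 2 := by
  simp only [trace, diag_apply, mul_apply, transpose_apply, sq]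
  exact sum_comm

theorem tight_frames_minimize_mse_general (M N : ℕ) (T : ℝ) :
    (∀ S : Matrix (Fin M) (Fin M) ℝ, S.PosDef → Matrix.trace S = T →
      (M : ℝ) ^ 2 / T ≤ Matrix.trace S⁻¹ ∧
      (Matrix.trace S⁻¹ = (M : ℝ) ^ 2 / T ↔ S = (T / (M : ℝ)) • (1 : Matrix (Fin M) (Fin M) ℝ))) ∧
    (∀ F : Matrix (Fin M) (Fin N) ℝ, (F * F.transpose).PosDef →
      (∑ n : Fin N, ∑ i : Fin M, (F i n) ^ 2 = (N : ℝ)) →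
      (M : ℝ) ^ 2 / (N : ℝ) ≤ Matrix.trace (F * F.transpose)⁻¹ ∧
      (Matrix.trace (F * F.transpose)⁻¹ = (M : ℝ) ^ 2 / (N : ℝ) ↔
        ∃ A : ℝ, F * F.transpose = A • (1 : Matrix (Fin M) (Fin M) ℝ))) := by
  have trace_inv_bound : ∀ S : Matrix (Fin M) (Fin M) ℝ, S.PosDef →
      (M : ℝ) ^ 2 / trace S ≤ trace S⁻¹ ∧
      (trace S⁻¹ = (M : ℝ) ^ 2 / trace S ↔ S = (trace S / M) • 1) := fun S hS ↦ by
    simpa only [Fintype.card_fin] using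
      And.intro hS.sq_card_div_trace_le_trace_inv hS.trace_inv_eq_sq_card_div_trace_iff
  refine ⟨fun S hS hT ↦ hT ▸ trace_inv_bound S hS, fun F hF hsum ↦ ?_⟩
  rw [exists_eq_smul_one_iff, Fintype.card_fin, ← hsum, ← trace_mul_transpose_self]
  exact trace_inv_bound _ hF

/-- Among symmetric positive definite `M×M` matrices with `Tr(S) = T`, the quantity
`Tr(S⁻¹)` is minimized exactly when `S = (T/M)·I`, with minimum `M²/T`. Consequently,
among frames `{fₙ}` in `ℝ^M` with `Σ‖fₙ‖² = N`, tight frames minimize `Tr[(FF*)⁻¹]`,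
achieving `M²/N`. -/
theorem tight_frames_minimize_mse (M N : ℕ) (hM : 0 < M) (hN : 0 < N) (T : ℝ) (hT : 0 < T) :
    (∀ S : Matrix (Fin M) (Fin M) ℝ, S.PosDef → Matrix.trace S = T →
      (M : ℝ) ^ 2 / T ≤ Matrix.trace S⁻¹ ∧
      (Matrix.trace S⁻¹ = (M : ℝ) ^ 2 / T ↔ S = (T / (M : ℝ)) • (1 : Matrix (Fin M) (Fin M) ℝ))) ∧
    (∀ F : Matrix (Fin M) (Fin N) ℝ, (F * F.transpose).PosDef →
      (∑ n : Fin N, ∑ i : Fin M, (F i n) ^ 2 = (N : ℝ)) →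
      (M : ℝ) ^ 2 / (N : ℝ) ≤ Matrix.trace (F * F.transpose)⁻¹ ∧
      (Matrix.trace (F * F.transpose)⁻¹ = (M : ℝ) ^ 2 / (N : ℝ) ↔
        ∃ A : ℝ, F * F.transpose = A • (1 : Matrix (Fin M) (Fin M) ℝ))) :=
  tight_frames_minimize_mse_general M N T
end
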